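/- For n ≥ 2 and D, E ∈ ℂ, the residue at w = 0 of the function ψ(w) = (D + (D−E)/w)^n / (1 + w) equals D^n − E^n. -/

import Mathlib

/-!
The integrand is `p(1/z) / (z + 1)` for the polynomial `p(u) = (D + (D - E) u) ^ n`. For
`r < ‖a‖` the functional `p ↦ ∮ z in C(0, r), p(1/z) / (z - a)` is computed on monomials by
induction on the degree, using the partial fraction `z⁻¹ / (z - a) = a⁻¹ (1 / (z - a) - 1 / z)`;
it equals `2πi (p(0) - p(1/a))`. At `a = -1` we have `p(0) = D ^ n` and `p(-1) = E ^ n`.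
-/

open Complex Metric Polynomial Real

theorem circleIntegral_sub_inv_of_radius_lt_dist {c w : ℂ} {R : ℝ} (hR : 0 ≤ R)
    (hw : R < dist w c) : (∮ z in C(c, R), (z - w)⁻¹) = 0 := by
  have hne : ∀ z ∈ closedBall c R, z - w ≠ 0 := fun z hz h => by
    rw [mem_closedBall, sub_eq_zero.1 h] at hz
    linarith
  refine circleIntegral_eq_zero_of_differentiable_on_off_countable hR Set.countable_empty
    ((continuousOn_id.sub continuousOn_const).inv₀ hne) fun z hz => ?_
  exact (differentiableAt_id.sub_const w).inv (hne z (ball_subset_closedBall hz.1))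

theorem circleIntegral_inv_pow_succ {R : ℝ} (hR : R ≠ 0) (j : ℕ) :
    (∮ z in C(0, R), z⁻¹ ^ (j + 1)) = 2 * π * I * 0 ^ j := by
  rcases j with _ | j
  · simpa using circleIntegral.integral_sub_center_inv 0 hR
  · have hne : (-(j + 2 : ℕ) : ℤ) ≠ -1 := by omega
    have hzpow := circleIntegral.integral_sub_zpow_of_ne hne 0 0 R
    simp only [sub_zero, zpow_neg, zpow_natCast] at hzpow
    simp [inv_pow, hzpow]

section InvSub

variable {r : ℝ} {a : ℂ}

theorem sub_ne_zero_of_mem_sphere_of_lt_norm (ha : r < ‖a‖) {z : ℂ} (hz : z ∈ sphere (0 : ℂ) r) :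
    z - a ≠ 0 :=
  sub_ne_zero.2 fun h => ha.ne' (mem_sphere_zero_iff_norm.1 (h ▸ hz))

theorem circleIntegrable_eval_inv_div_sub (hr : 0 < r) (ha : r < ‖a‖) (p : ℂ[X]) :
    CircleIntegrable (fun z => p.eval z⁻¹ / (z - a)) 0 r := by
  refine ContinuousOn.circleIntegrable hr.le ?_
  have hinv : ContinuousOn (·⁻¹) (sphere (0 : ℂ) r) :=
    continuousOn_inv₀.mono fun z hz => ne_zero_of_mem_sphere hr.ne' ⟨z, hz⟩
  exact (p.continuous.comp_continuousOn hinv).div (continuousOn_id.sub continuousOn_const)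
    fun z hz => sub_ne_zero_of_mem_sphere_of_lt_norm ha hz

theorem circleIntegral_inv_pow_div_sub (hr : 0 < r) (ha : r < ‖a‖) (j : ℕ) :
    (∮ z in C(0, r), z⁻¹ ^ j / (z - a)) = 2 * π * I * (0 ^ j - a⁻¹ ^ j) := by
  have ha0 : a ≠ 0 := norm_pos_iff.1 (hr.trans ha)
  induction j with
  | zero =>
    simpa using circleIntegral_sub_inv_of_radius_lt_dist hr.le (by simpa using ha)
  | succ j ih =>
    have hsplit : ∀ z ∈ sphere (0 : ℂ) r,
        z⁻¹ ^ (j + 1) / (z - a) = a⁻¹ * (z⁻¹ ^ j / (z - a) - z⁻¹ ^ (j + 1)) := fun z hz => by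
      have hz0 : z ≠ 0 := ne_zero_of_mem_sphere hr.ne' ⟨z, hz⟩
      have hza : z - a ≠ 0 := sub_ne_zero_of_mem_sphere_of_lt_norm ha hz
      rw [inv_pow, inv_pow]
      field_simp
      ring
    have hpow : CircleIntegrable (fun z => z⁻¹ ^ (j + 1)) 0 r := by
      refine ContinuousOn.circleIntegrable hr.le ((continuousOn_inv₀.mono fun z hz => ?_).pow _)
      exact ne_zero_of_mem_sphere hr.ne' ⟨z, hz⟩
    have hterm : CircleIntegrable (fun z => z⁻¹ ^ j / (z - a)) 0 r := by
      simpa using circleIntegrable_eval_inv_div_sub hr ha (X ^ j)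
    rw [circleIntegral.integral_congr hr.le hsplit, circleIntegral.integral_const_mul,
      circleIntegral.integral_sub hterm hpow, ih, circleIntegral_inv_pow_succ hr.ne',
      pow_succ 0, mul_zero]
    ring

theorem circleIntegral_eval_inv_div_sub (hr : 0 < r) (ha : r < ‖a‖) (p : ℂ[X]) :
    (∮ z in C(0, r), p.eval z⁻¹ / (z - a)) = 2 * π * I * (p.eval 0 - p.eval a⁻¹) := by
  induction p using Polynomial.induction_on' with
  | add p q hp hq =>
    simp only [eval_add, add_div]
    rw [circleIntegral.integral_add (circleIntegrable_eval_inv_div_sub hr ha p)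
      (circleIntegrable_eval_inv_div_sub hr ha q), hp, hq]
    ring
  | monomial j c =>
    simp only [eval_monomial, mul_div_assoc, circleIntegral.integral_const_mul,
      circleIntegral_inv_pow_div_sub hr ha]
    ring

end InvSub

theorem residue_formula_binomial_general (n : ℕ) (D E : ℂ)
    (r : ℝ) (hr0 : 0 < r) (hr1 : r < 1) :
    (∮ z in C(0, r), (D + (D - E) / z) ^ n / (1 + z))
      = 2 * Real.pi * Complex.I * (D ^ n - E ^ n) := by
  set p : ℂ[X] := (C D + C (D - E) * X) ^ n
  have hintegrand : ∀ z : ℂ, (D + (D - E) / z) ^ n / (1 + z) = p.eval z⁻¹ / (z - (-1)) := by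
    intro z
    simp only [p, eval_pow, eval_add, eval_mul, eval_C, eval_X, div_eq_mul_inv, sub_neg_eq_add,
      add_comm z]
  simp only [hintegrand]
  rw [circleIntegral_eval_inv_div_sub hr0 (by simpa using hr1)]
  simp only [p, eval_pow, eval_add, eval_mul, eval_C, eval_X]
  ring

theorem residue_formula_binomial (n : ℕ) (hn : 2 ≤ n) (D E : ℂ)
    (r : ℝ) (hr0 : 0 < r) (hr1 : r < 1) :
    (∮ z in C(0, r), (D + (D - E) / z) ^ n / (1 + z))
      = 2 * Real.pi * Complex.I * (D ^ n - E ^ n) :=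
  residue_formula_binomial_general n D E r hr0 hr1
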